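/- arXiv:1504.07507 — 4 statements merged into one kernel-verified Lean document; each statement's English description precedes it below -/
import Mathlib

section
/- Let q be a positive rational and let (x, y) be a rational point with y ≠ 0 satisfying y² = x³ − q²x and x, y > 0. Then the rationals a = (x² − q²)/y, b = 2qx/y, c = (x² + q²)/y satisfy a² + b² = c² and a·b = 2q. -/
/-! The Pythagorean relation is the identity `(x² - q²)² + (2qx)² = (x² + q²)²` scaled by `y⁻²`,
and the area relation is the curve equation, since `(x² - q²) · 2qx = 2q (x³ - q²x) = 2q y²`. -/

theorem div_sq_add_div_sq_eq_div_sq {K : Type*} [Field K] (q x y : K) :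
    ((x ^ 2 - q ^ 2) / y) ^ 2 + (2 * q * x / y) ^ 2 = ((x ^ 2 + q ^ 2) / y) ^ 2 := by
  rw [div_pow, div_pow, div_pow, ← add_div]
  ring

theorem div_mul_div_eq_of_congruent_curve {K : Type*} [Field K] {q x y : K} (hy : y ≠ 0)
    (hcurve : y ^ 2 = x ^ 3 - q ^ 2 * x) :
    ((x ^ 2 - q ^ 2) / y) * (2 * q * x / y) = 2 * q := by
  rw [div_mul_div_comm, div_eq_iff (mul_ne_zero hy hy), ← sq, hcurve]
  ring

theorem elliptic_point_to_triangle_general (q x y : ℚ)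
    (hy : 0 < y) (hcurve : y^2 = x^3 - q^2 * x) :
    ((x^2 - q^2) / y)^2 + (2 * q * x / y)^2 = ((x^2 + q^2) / y)^2 ∧
    ((x^2 - q^2) / y) * (2 * q * x / y) = 2 * q :=
  ⟨div_sq_add_div_sq_eq_div_sq q x y, div_mul_div_eq_of_congruent_curve hy.ne' hcurve⟩

theorem elliptic_point_to_triangle (q x y : ℚ) (hq : 0 < q)
    (hx : 0 < x) (hy : 0 < y) (hcurve : y^2 = x^3 - q^2 * x) :
    ((x^2 - q^2) / y)^2 + (2 * q * x / y)^2 = ((x^2 + q^2) / y)^2 ∧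
    ((x^2 - q^2) / y) * (2 * q * x / y) = 2 * q :=
  elliptic_point_to_triangle_general q x y hy hcurve
end

section
/- The maps (a,b,c) ↦ (q(a+c)/b, 2q²(a+c)/b²) and (x,y) ↦ ((x² − q²)/y, 2qx/y, (x² + q²)/y) are mutually inverse bijections between the set A[q] = {(a,b,c) ∈ ℝ³ : a,b,c > 0, a² + b² = c², ab = 2q} and the set E⁺[q] = {(x,y) ∈ ℝ² : x,y > 0, y² = x³ − q²x}. -/
/-!
For a triangle `(a, b, c)` of area `q` with image `(x, y)`, the Euclid parametrisation
`(x² - q², 2 q x, x² + q²)` of Pythagorean triples equals `y • (a, b, c)`; so `ptToTri` undoes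
`triToPt`, and the first coordinate `x² - q² = a y` together with `y = a x` is the curve equation.
Conversely, on the curve `y⁻¹ • (x² - q², 2 q x, x² + q²)` is Pythagorean with
`a b / 2 = q (x³ - q² x) / y² = q`.
-/

def Atri (q : ℝ) : Set (ℝ × ℝ × ℝ) :=
  {p | 0 < p.1 ∧ 0 < p.2.1 ∧ 0 < p.2.2 ∧
       p.1^2 + p.2.1^2 = p.2.2^2 ∧ p.1 * p.2.1 = 2 * q}

def EplusCurve (q : ℝ) : Set (ℝ × ℝ) :=
  {p | 0 < p.1 ∧ 0 < p.2 ∧ p.2^2 = p.1^3 - q^2 * p.1}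

noncomputable def triToPt (q : ℝ) (p : ℝ × ℝ × ℝ) : ℝ × ℝ :=
  (q * (p.1 + p.2.2) / p.2.1, 2 * q^2 * (p.1 + p.2.2) / p.2.1^2)

noncomputable def ptToTri (q : ℝ) (p : ℝ × ℝ) : ℝ × ℝ × ℝ :=
  ((p.1^2 - q^2) / p.2, 2 * q * p.1 / p.2, (p.1^2 + q^2) / p.2)

def euclidTriple (q x : ℝ) : ℝ × ℝ × ℝ :=
  (x^2 - q^2, 2 * q * x, x^2 + q^2)

section

variable {q x y a b c : ℝ}

lemma mem_Atri :
    (a, b, c) ∈ Atri q ↔ 0 < a ∧ 0 < b ∧ 0 < c ∧ a ^ 2 + b ^ 2 = c ^ 2 ∧ a * b = 2 * q := Iff.rfl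

lemma mem_EplusCurve : (x, y) ∈ EplusCurve q ↔ 0 < x ∧ 0 < y ∧ y ^ 2 = x ^ 3 - q ^ 2 * x := Iff.rfl

lemma ptToTri_eq_inv_smul_euclidTriple : ptToTri q (x, y) = y⁻¹ • euclidTriple q x := by
  simp only [ptToTri, euclidTriple, Prod.smul_mk, smul_eq_mul, div_eq_inv_mul]

lemma triToPt_snd_eq_mul_fst (hab : a * b = 2 * q) (hb : b ≠ 0) :
    (triToPt q (a, b, c)).2 = a * (triToPt q (a, b, c)).1 := by
  simp only [triToPt]
  field_simp
  linear_combination (-q * (a + c)) * hab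

lemma euclidTriple_triToPt_fst (hb : b ≠ 0) (hpyth : a ^ 2 + b ^ 2 = c ^ 2) :
    euclidTriple q (triToPt q (a, b, c)).1 = (triToPt q (a, b, c)).2 • (a, b, c) := by
  simp only [euclidTriple, triToPt, Prod.smul_mk, smul_eq_mul, Prod.mk.injEq]
  refine ⟨?_, ?_, ?_⟩ <;> field_simp
  · linear_combination (-q ^ 2) * hpyth
  · linear_combination q ^ 2 * hpyth

lemma ptToTri_triToPt (h : (a, b, c) ∈ Atri q) : ptToTri q (triToPt q (a, b, c)) = (a, b, c) := by
  obtain ⟨ha, hb, hc, hpyth, hab⟩ := mem_Atri.1 h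
  have hy : (triToPt q (a, b, c)).2 ≠ 0 := by
    have : 0 < q := by nlinarith
    simp only [triToPt]
    positivity
  rw [ptToTri_eq_inv_smul_euclidTriple, euclidTriple_triToPt_fst hb.ne' hpyth, inv_smul_smul₀ hy]

lemma triToPt_ptToTri (hq : q ≠ 0) (hx : x ≠ 0) (hy : y ≠ 0) :
    triToPt q (ptToTri q (x, y)) = (x, y) := by
  simp only [triToPt, ptToTri, Prod.mk.injEq]
  constructor <;> field_simp <;> ring

lemma triToPt_mem_EplusCurve (h : (a, b, c) ∈ Atri q) : triToPt q (a, b, c) ∈ EplusCurve q := by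
  obtain ⟨ha, hb, hc, hpyth, hab⟩ := mem_Atri.1 h
  have hsq := congrArg Prod.fst (euclidTriple_triToPt_fst (q := q) hb.ne' hpyth)
  simp only [euclidTriple, Prod.smul_mk, smul_eq_mul] at hsq
  have hy := triToPt_snd_eq_mul_fst (c := c) hab hb.ne'
  have hq : 0 < q := by nlinarith
  refine ⟨by simp only [triToPt]; positivity, by simp only [triToPt]; positivity, ?_⟩
  set p := triToPt q (a, b, c)
  calc p.2 ^ 2 = p.1 * (p.2 * a) := by rw [hy]; ring
    _ = p.1 ^ 3 - q ^ 2 * p.1 := by rw [← hsq]; ring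

lemma ptToTri_mem_Atri (hq : 0 < q) (h : (x, y) ∈ EplusCurve q) : ptToTri q (x, y) ∈ Atri q := by
  obtain ⟨hx, hy, hcurve⟩ := mem_EplusCurve.1 h
  have hxq : q ^ 2 < x ^ 2 := by nlinarith
  refine ⟨?_, ?_, ?_, ?_, ?_⟩ <;> simp only [ptToTri]
  · exact div_pos (by linarith) hy
  · positivity
  · positivity
  · field_simp
    ring
  · field_simp
    linear_combination -hcurve

end

theorem triangle_elliptic_bijection (q : ℝ) (hq : 0 < q) :
    Set.BijOn (triToPt q) (Atri q) (EplusCurve q) ∧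
    Set.BijOn (ptToTri q) (EplusCurve q) (Atri q) ∧
    Set.InvOn (ptToTri q) (triToPt q) (Atri q) (EplusCurve q) := by
  have hmaps : Set.MapsTo (triToPt q) (Atri q) (EplusCurve q) :=
    fun _ hp => triToPt_mem_EplusCurve hp
  have hmaps' : Set.MapsTo (ptToTri q) (EplusCurve q) (Atri q) :=
    fun _ hp => ptToTri_mem_Atri hq hp
  have hinv : Set.InvOn (ptToTri q) (triToPt q) (Atri q) (EplusCurve q) :=
    ⟨fun _ hp => ptToTri_triToPt hp,
     fun _ hp => triToPt_ptToTri hq.ne' hp.1.ne' hp.2.1.ne'⟩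
  exact ⟨hinv.bijOn hmaps hmaps', hinv.symm.bijOn hmaps' hmaps, hinv⟩
end

section
/- If (x, y) with y ≠ 0 lies on the curve y² = x³ − q²x (q > 0 real), then so do the points (x, −y); moreover if additionally x > 0 and a = (x² − q²)/y, b = 2qx/y, c = (x² + q²)/y, then the point (q(b+c)/a, 2q²(b+c)/a²) also lies on the curve. -/
/-!
Since `b + c = (x + q)² / y` and `a = (x - q)(x + q) / y`, the point is
`(q (x + q) / (x - q), 2 q² y / (x - q)²)`: the sum of `(x, y)` and the `2`-torsion point `(q, 0)`
in the group law of the curve. The denominators are harmless because `y² = x (x² - q²)` forces `x² ≠ q²` once `y ≠ 0`.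
-/

variable {K : Type*} [Field K]

lemma sq_sub_sq_ne_zero_of_eq_cube_sub {q x y : K} (hy : y ≠ 0)
    (h : y ^ 2 = x ^ 3 - q ^ 2 * x) : x ^ 2 - q ^ 2 ≠ 0 := by
  intro hxq
  exact hy (pow_eq_zero_iff two_ne_zero |>.mp (by linear_combination h + x * hxq))

lemma eq_cube_sub_of_add_two_torsion {q x y : K} (hxq : x - q ≠ 0)
    (h : y ^ 2 = x ^ 3 - q ^ 2 * x) :
    (2 * q ^ 2 * y / (x - q) ^ 2) ^ 2
      = (q * (x + q) / (x - q)) ^ 3 - q ^ 2 * (q * (x + q) / (x - q)) := by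
  field_simp
  linear_combination 4 * q ^ 4 * h

section

variable {q x y : K} (hy : y ≠ 0) (hadd : x + q ≠ 0) (hsub : x - q ≠ 0)
include hy hadd hsub

lemma mul_add_div_eq_div_sub :
    q * (2 * q * x / y + (x ^ 2 + q ^ 2) / y) / ((x ^ 2 - q ^ 2) / y)
      = q * (x + q) / (x - q) := by
  rw [sq_sub_sq]
  field_simp
  ring

lemma mul_add_div_sq_eq_div_sub_sq :
    2 * q ^ 2 * (2 * q * x / y + (x ^ 2 + q ^ 2) / y) / ((x ^ 2 - q ^ 2) / y) ^ 2
      = 2 * q ^ 2 * y / (x - q) ^ 2 := by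
  rw [sq_sub_sq]
  field_simp
  ring

end

theorem symmetric_points_on_curve_general (q x y : ℝ) (hy : y ≠ 0)
    (h : y^2 = x^3 - q^2 * x) :
    (-y)^2 = x^3 - q^2 * x ∧
    (0 < x →
      (2 * q^2 * ((2 * q * x / y) + ((x^2 + q^2) / y)) / ((x^2 - q^2) / y)^2)^2
        = (q * ((2 * q * x / y) + ((x^2 + q^2) / y)) / ((x^2 - q^2) / y))^3
          - q^2 * (q * ((2 * q * x / y) + ((x^2 + q^2) / y)) / ((x^2 - q^2) / y))) := by
  refine ⟨by rwa [neg_sq], fun _ => ?_⟩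
  obtain ⟨hadd, hsub⟩ := mul_ne_zero_iff.mp (sq_sub_sq x q ▸ sq_sub_sq_ne_zero_of_eq_cube_sub hy h)
  rw [mul_add_div_eq_div_sub hy hadd hsub, mul_add_div_sq_eq_div_sub_sq hy hadd hsub]
  exact eq_cube_sub_of_add_two_torsion hsub h

theorem symmetric_points_on_curve (q x y : ℝ) (hq : 0 < q) (hy : y ≠ 0)
    (h : y^2 = x^3 - q^2 * x) :
    (-y)^2 = x^3 - q^2 * x ∧
    (0 < x →
      (2 * q^2 * ((2 * q * x / y) + ((x^2 + q^2) / y)) / ((x^2 - q^2) / y)^2)^2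
        = (q * ((2 * q * x / y) + ((x^2 + q^2) / y)) / ((x^2 - q^2) / y))^3
          - q^2 * (q * ((2 * q * x / y) + ((x^2 + q^2) / y)) / ((x^2 - q^2) / y))) :=
  symmetric_points_on_curve_general q x y hy h
end

section
/- No perfect square is a congruent number; in particular 1 is not a congruent number: there are no positive rationals a, b, c with a² + b² = c² and a·b = 2. -/
/-!
If a rational right triangle with legs `a`, `b` and hypotenuse `c` had area `m²`, then
`c⁴ - (a² - b²)² = 4a²b² = (2m)⁴`, and `a ≠ b` because `√2` is irrational. Clearing denominators
gives positive integers with `x⁴ = y⁴ + z²`, which Fermat's descent rules out: for a primitive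
solution, parametrising the Pythagorean triple `(y², z, x²)` (or `(z, y², x²)` when `y` is even,
followed by a second parametrisation of `x² = 4s⁴ + t⁴`) yields a primitive solution with
smaller `x`.
-/

theorem Int.exists_pos_sq_of_isCoprime_of_mul_eq_sq {a b c : ℤ} (hab : IsCoprime a b)
    (h : a * b = c ^ 2) (ha : 0 < a) : ∃ d, 0 < d ∧ a = d ^ 2 := by
  obtain ⟨d, hd | hd⟩ := Int.sq_of_isCoprime hab h
  · exact ⟨|d|, abs_pos.mpr fun hd0 => by simp [hd, hd0] at ha, by rw [sq_abs, hd]⟩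
  · nlinarith [sq_nonneg d]

theorem Rat.sq_ne_two_mul_sq {a : ℚ} (ha : a ≠ 0) (c : ℚ) : c ^ 2 ≠ 2 * a ^ 2 := by
  intro h
  have : IsSquare (2 : ℚ) := ⟨c / a, by field_simp; linear_combination -h⟩
  exact Nat.prime_two.not_isSquare (Rat.isSquare_ofNat_iff.mp this)

theorem Rat.exists_intCast_eq_mul_of_den_dvd {q : ℚ} {n : ℕ} (h : q.den ∣ n) :
    ∃ k : ℤ, (k : ℚ) = n * q := by
  obtain ⟨r, rfl⟩ := h
  exact ⟨q.num * r, by push_cast; rw [← Rat.mul_den_eq_num]; ring⟩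

namespace FermatRightTriangle

structure PrimitiveSolution (x y z : ℤ) : Prop where
  x_pos : 0 < x
  y_pos : 0 < y
  z_pos : 0 < z
  isCoprime : IsCoprime x y
  eq : x ^ 4 = y ^ 4 + z ^ 2

variable {x y z : ℤ}

namespace PrimitiveSolution

theorem isCoprime_sq_left (h : PrimitiveSolution x y z) : IsCoprime (y ^ 2) z := by
  have h4 : IsCoprime (y ^ 2) (z ^ 2 + y ^ 2 * y ^ 2) := by
    rw [show z ^ 2 + y ^ 2 * y ^ 2 = x ^ 4 by linear_combination -h.eq]
    exact h.isCoprime.symm.pow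
  exact IsCoprime.pow_right_iff two_pos |>.mp (IsCoprime.add_mul_left_right_iff.mp h4)

theorem exists_lt_of_odd (h : PrimitiveSolution x y z) (hy : Odd y) :
    ∃ x' y' z', PrimitiveSolution x' y' z' ∧ x' < x := by
  have htriple : PythagoreanTriple (y ^ 2) z (x ^ 2) := by
    unfold PythagoreanTriple; linear_combination -h.eq
  obtain ⟨m, n, hy2, hz, hx2, hmn, -, hm⟩ := htriple.coprime_classification'
    (Int.isCoprime_iff_gcd_eq_one.mp h.isCoprime_sq_left) (Int.odd_iff.mp hy.pow)
    (pow_pos h.x_pos 2)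
  have hmn_pos : 0 < m * n := by nlinarith [h.z_pos]
  have hm_pos : 0 < m := lt_of_le_of_ne hm (by rintro rfl; simp at hmn_pos)
  have hn_pos : 0 < n := pos_of_mul_pos_right hmn_pos hm
  -- `m⁴ - n⁴ = (m² + n²)(m² - n²) = x²y²`
  refine ⟨m, n, x * y, ⟨hm_pos, hn_pos, mul_pos h.x_pos h.y_pos,
    Int.isCoprime_iff_gcd_eq_one.mpr hmn, ?_⟩, ?_⟩
  · linear_combination -y ^ 2 * hx2 - (m ^ 2 + n ^ 2) * hy2
  · nlinarith [h.x_pos]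

theorem exists_lt_of_sq_eq_four_mul_pow_four_add_pow_four {s t : ℤ} (hs : 0 < s) (ht : 0 < t)
    (hst : IsCoprime s t) (ht_odd : Odd t) (hx : 0 < x) (h : x ^ 2 = 4 * s ^ 4 + t ^ 4) :
    ∃ x' y' z', PrimitiveSolution x' y' z' ∧ x' < x := by
  have htriple : PythagoreanTriple (t ^ 2) (2 * s ^ 2) x := by
    unfold PythagoreanTriple; linear_combination -h
  have hcop : IsCoprime (t ^ 2) (2 * s ^ 2) :=
    (Int.isCoprime_two_right.mpr ht_odd.pow).mul_right hst.symm.pow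
  obtain ⟨p, q, ht2, hs2, hx', hpq, -, hp⟩ := htriple.coprime_classification'
    (Int.isCoprime_iff_gcd_eq_one.mp hcop) (Int.odd_iff.mp ht_odd.pow) hx
  have hpq_eq : p * q = s ^ 2 := by linarith
  have hpq_pos : 0 < p * q := by rw [hpq_eq]; positivity
  have hp_pos : 0 < p := lt_of_le_of_ne hp (by rintro rfl; simp at hpq_pos)
  have hq_pos : 0 < q := pos_of_mul_pos_right hpq_pos hp
  have hpq' := Int.isCoprime_iff_gcd_eq_one.mpr hpq
  obtain ⟨f, hf, rfl⟩ := Int.exists_pos_sq_of_isCoprime_of_mul_eq_sq hpq' hpq_eq hp_pos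
  obtain ⟨e, he, rfl⟩ := Int.exists_pos_sq_of_isCoprime_of_mul_eq_sq hpq'.symm
    (by rw [mul_comm, hpq_eq]) hq_pos
  refine ⟨f, e, t, ⟨hf, he, ht, IsCoprime.pow_iff two_pos two_pos |>.mp hpq', ?_⟩, ?_⟩
  · linear_combination -ht2
  · nlinarith [pow_pos he 4]

theorem exists_lt_of_sq_eq_two_mul {m n v : ℤ} (hm : 0 < m) (hn : 0 < n) (hmn : IsCoprime m n)
    (hm_even : Even m) (hx : 0 < x) (hv : v ^ 2 = 2 * m * n) (hx2 : x ^ 2 = m ^ 2 + n ^ 2) :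
    ∃ x' y' z', PrimitiveSolution x' y' z' ∧ x' < x := by
  have hn_odd : Odd n := Int.isCoprime_two_left.mp (hmn.of_isCoprime_of_dvd_left hm_even.two_dvd)
  obtain ⟨u, rfl⟩ := hm_even.two_dvd
  obtain ⟨w, rfl⟩ : 2 ∣ v := Int.prime_two.dvd_of_dvd_pow (n := 2) ⟨2 * u * n, by rw [hv]; ring⟩
  have hun : IsCoprime u n := hmn.of_mul_left_right
  have hu : 0 < u := by omega
  obtain ⟨s, hs, rfl⟩ := Int.exists_pos_sq_of_isCoprime_of_mul_eq_sq hun (by linarith) hu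
  obtain ⟨t, ht, rfl⟩ := Int.exists_pos_sq_of_isCoprime_of_mul_eq_sq hun.symm (by linarith) hn
  exact exists_lt_of_sq_eq_four_mul_pow_four_add_pow_four hs ht
    (IsCoprime.pow_iff two_pos two_pos |>.mp hun) (Int.odd_pow' two_ne_zero |>.mp hn_odd) hx
    (by linear_combination hx2)

theorem exists_lt_of_even (h : PrimitiveSolution x y z) (hy : Even y) :
    ∃ x' y' z', PrimitiveSolution x' y' z' ∧ x' < x := by
  have hz : Odd z := Int.isCoprime_two_left.mp
    (h.isCoprime_sq_left.of_isCoprime_of_dvd_left (hy.two_dvd.pow two_ne_zero))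
  have htriple : PythagoreanTriple z (y ^ 2) (x ^ 2) := by
    unfold PythagoreanTriple; linear_combination -h.eq
  obtain ⟨m, n, -, hy2, hx2, hmn, hpar, hm⟩ := htriple.coprime_classification'
    (Int.isCoprime_iff_gcd_eq_one.mp h.isCoprime_sq_left.symm) (Int.odd_iff.mp hz)
    (pow_pos h.x_pos 2)
  have hmn_pos : 0 < m * n := by nlinarith [h.y_pos]
  have hm_pos : 0 < m := lt_of_le_of_ne hm (by rintro rfl; simp at hmn_pos)
  have hn_pos : 0 < n := pos_of_mul_pos_right hmn_pos hm
  have hmn' := Int.isCoprime_iff_gcd_eq_one.mpr hmn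
  rcases hpar with ⟨hm_even, -⟩ | ⟨-, hn_even⟩
  · exact exists_lt_of_sq_eq_two_mul hm_pos hn_pos hmn' (Int.even_iff.mpr hm_even) h.x_pos hy2 hx2
  · exact exists_lt_of_sq_eq_two_mul hn_pos hm_pos hmn'.symm (Int.even_iff.mpr hn_even) h.x_pos
      (v := y) (by linear_combination hy2) (by linear_combination hx2)

theorem exists_lt (h : PrimitiveSolution x y z) :
    ∃ x' y' z', PrimitiveSolution x' y' z' ∧ x' < x :=
  (Int.even_or_odd y).elim h.exists_lt_of_even h.exists_lt_of_odd

end PrimitiveSolution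

theorem not_primitiveSolution (x y z : ℤ) : ¬ PrimitiveSolution x y z := by
  induction hn : x.toNat using Nat.strong_induction_on generalizing x y z with
  | _ n ih =>
    intro h
    obtain ⟨x', y', z', h', hlt⟩ := h.exists_lt
    exact ih x'.toNat (by have := h'.x_pos; omega) x' y' z' rfl h'

theorem exists_primitiveSolution_of_pos (hx : 0 < x) (hy : 0 < y) (hz : 0 < z)
    (h : x ^ 4 = y ^ 4 + z ^ 2) : ∃ x' y' z', PrimitiveSolution x' y' z' := by
  obtain ⟨g, a, b, hg, hab, rfl, rfl⟩ :=
    Int.exists_gcd_one' (Int.gcd_pos_of_ne_zero_right x hy.ne')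
  obtain ⟨c, rfl⟩ : (g : ℤ) ^ 2 ∣ z :=
    (Int.pow_dvd_pow_iff two_ne_zero).mp ⟨a ^ 4 - b ^ 4, by linear_combination -h⟩
  have hg' : (0 : ℤ) < g := by exact_mod_cast hg
  refine ⟨a, b, c, pos_of_mul_pos_left hx hg'.le, pos_of_mul_pos_left hy hg'.le,
    pos_of_mul_pos_right hz (by positivity), Int.isCoprime_iff_gcd_eq_one.mpr hab, ?_⟩
  apply mul_left_cancel₀ (pow_ne_zero 4 hg'.ne')
  linear_combination h

end FermatRightTriangle

theorem Int.pow_four_ne_pow_four_add_sq {x y z : ℤ} (hy : y ≠ 0) (hz : z ≠ 0) :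
    x ^ 4 ≠ y ^ 4 + z ^ 2 := by
  intro h
  have hx : x ≠ 0 := by
    rintro rfl
    have : 0 < y ^ 4 := by positivity
    nlinarith [sq_nonneg z]
  obtain ⟨x', y', z', h'⟩ := FermatRightTriangle.exists_primitiveSolution_of_pos
    (abs_pos.mpr hx) (abs_pos.mpr hy) (abs_pos.mpr hz)
    (by simpa only [Even.pow_abs ⟨2, rfl⟩, sq_abs] using h)
  exact FermatRightTriangle.not_primitiveSolution x' y' z' h'

theorem Rat.pow_four_ne_pow_four_add_sq {x y z : ℚ} (hy : y ≠ 0) (hz : z ≠ 0) :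
    x ^ 4 ≠ y ^ 4 + z ^ 2 := by
  intro h
  set N := x.den * y.den * z.den
  have hN0 : (N : ℚ) ≠ 0 := by positivity
  obtain ⟨X, hX⟩ := exists_intCast_eq_mul_of_den_dvd (q := x) (n := N) ⟨y.den * z.den, by ring⟩
  obtain ⟨Y, hY⟩ := exists_intCast_eq_mul_of_den_dvd (q := y) (n := N) ⟨x.den * z.den, by ring⟩
  obtain ⟨Z, hZ⟩ := exists_intCast_eq_mul_of_den_dvd (q := z) (n := N ^ 2)
    ⟨x.den * y.den * N, by ring⟩
  push_cast at hZ
  refine Int.pow_four_ne_pow_four_add_sq (x := X) (y := Y) (z := Z) ?_ ?_ ?_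
  · exact_mod_cast hY ▸ mul_ne_zero hN0 hy
  · exact_mod_cast hZ ▸ mul_ne_zero (pow_ne_zero 2 hN0) hz
  · have : (X : ℚ) ^ 4 = (Y : ℚ) ^ 4 + (Z : ℚ) ^ 2 := by
      rw [hX, hY, hZ]; linear_combination (N : ℚ) ^ 4 * h
    exact_mod_cast this

theorem right_triangle_area_ne_sq {a b c : ℚ} (ha : 0 < a) (hb : 0 < b)
    (h : a ^ 2 + b ^ 2 = c ^ 2) (m : ℚ) : a * b / 2 ≠ m ^ 2 := by
  intro harea
  have hm : m ≠ 0 := by rintro rfl; nlinarith [mul_pos ha hb]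
  have hab : a ^ 2 - b ^ 2 ≠ 0 := by
    intro hab
    have : a = b := by nlinarith
    subst this
    exact Rat.sq_ne_two_mul_sq ha.ne' c (by linear_combination -h)
  exact Rat.pow_four_ne_pow_four_add_sq (x := c) (mul_ne_zero two_ne_zero hm) hab
    (by linear_combination -(a ^ 2 + b ^ 2 + c ^ 2) * h + 8 * (a * b + 2 * m ^ 2) * harea)

theorem no_square_is_congruent :
    (∀ q : ℚ, 0 < q → (∃ m : ℚ, q = m^2) →
      ¬ ∃ a b c : ℚ, 0 < a ∧ 0 < b ∧ 0 < c ∧ a^2 + b^2 = c^2 ∧ a * b / 2 = q) ∧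
    ¬ ∃ a b c : ℚ, 0 < a ∧ 0 < b ∧ 0 < c ∧ a^2 + b^2 = c^2 ∧ a * b = 2 := by
  refine ⟨fun q _ ⟨m, hq⟩ ⟨a, b, c, ha, hb, _, h, harea⟩ =>
    right_triangle_area_ne_sq ha hb h m (harea.trans hq), ?_⟩
  rintro ⟨a, b, c, ha, hb, -, h, hab⟩
  exact right_triangle_area_ne_sq ha hb h 1 (by rw [hab]; norm_num)
end
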